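/- arXiv:1609.07649 — 11 statements merged into one kernel-verified Lean document; each statement's English description precedes it below -/
import Mathlib

section
/- Let (f, g, h) be an isotopism between two n-dimensional algebras A and A' over a field K. Then (a) f maps the left annihilator of A onto the left annihilator of A', i.e. f(Ann₋(A)) = Ann₋(A'); (b) g maps the right annihilator of A onto the right annihilator of A', i.e. g(Ann₊(A)) = Ann₊(A'); and (c) f(Ann₋(A)) ∩ g(Ann₊(A)) = Ann(A'). -/
/-
STATEMENT 0: Let (f, g, h) be an isotopism between two n-dimensional algebras A and A'
over a field K.  Then (a) f(Ann₋(A)) = Ann₋(A'), (b) g(Ann₊(A)) = Ann₊(A'), and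
(c) f(Ann₋(A)) ∩ g(Ann₊(A)) = Ann(A').

An algebra is modelled as a `K`-vector space together with a bilinear multiplication
`μ : A →ₗ[K] A →ₗ[K] A`; an isotopism is a triple of linear equivalences `f g h`
with `μ' (f u) (g v) = h (μ u v)` for all `u v`.
-/
theorem image_annihilators_of_isotopism
    {K A A' : Type*} [Field K]
    [AddCommGroup A] [Module K A] [AddCommGroup A'] [Module K A']
    (n : ℕ) [FiniteDimensional K A] [FiniteDimensional K A']
    (hdim : Module.finrank K A = n) (hdim' : Module.finrank K A' = n)
    (μ : A →ₗ[K] A →ₗ[K] A) (μ' : A' →ₗ[K] A' →ₗ[K] A')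
    (f g h : A ≃ₗ[K] A')
    (hiso : ∀ u v : A, μ' (f u) (g v) = h (μ u v)) :
    (⇑f '' {u : A | ∀ v : A, μ u v = 0} = {u : A' | ∀ v : A', μ' u v = 0}) ∧
    (⇑g '' {u : A | ∀ v : A, μ v u = 0} = {u : A' | ∀ v : A', μ' v u = 0}) ∧
    ((⇑f '' {u : A | ∀ v : A, μ u v = 0}) ∩ (⇑g '' {u : A | ∀ v : A, μ v u = 0}) =
      {u : A' | (∀ v : A', μ' u v = 0) ∧ (∀ v : A', μ' v u = 0)}) := by

  have ha : ⇑f '' {u : A | ∀ v : A, μ u v = 0} = {u : A' | ∀ v : A', μ' u v = 0} := by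
    ext x
    constructor
    · rintro ⟨u, hu, rfl⟩ v
      have := hiso u (g.symm v)
      rw [hu, g.apply_symm_apply] at this
      simpa using this
    · intro hx
      refine ⟨f.symm x, ?_, f.apply_symm_apply x⟩
      intro v
      have := hiso (f.symm x) v
      rw [f.apply_symm_apply, hx (g v)] at this
      exact h.injective (by simpa using this.symm)
  have hb : ⇑g '' {u : A | ∀ v : A, μ v u = 0} = {u : A' | ∀ v : A', μ' v u = 0} := by
    ext x
    constructor
    · rintro ⟨u, hu, rfl⟩ v
      have := hiso (f.symm v) u
      rw [hu, f.apply_symm_apply] at this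
      simpa using this
    · intro hx
      refine ⟨g.symm x, ?_, g.apply_symm_apply x⟩
      intro v
      have := hiso v (g.symm x)
      rw [g.apply_symm_apply, hx (f v)] at this
      exact h.injective (by simpa using this.symm)
  refine ⟨ha, hb, ?_⟩
  rw [ha, hb]
  rfl
end

section
/- Let t, t' : {1,…,n} × {1,…,n} → K be the structure constant matrices of two n-dimensional evolution algebras A_T and A_{T'} over a field K (so e_i e_i = Σ_j t_{ij} e_j in A_T, and analogously in A_{T'}). If there exist permutations α and β of {1,…,n} such that t'_{α(i)β(j)} = t_{ij} for all i, j, then A_T and A_{T'} are strongly isotopic. -/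
open scoped BigOperators

noncomputable section

/-- The product in the `n`-dimensional evolution algebra over `K` (on the model space
`Fin n → K`, whose standard basis is the natural basis) with structure constants `t`,
so that `eᵢ * eᵢ = ∑ⱼ t i j • eⱼ` and `eᵢ * eⱼ = 0` for `i ≠ j`. -/
def evolMul {K : Type*} [Field K] {n : ℕ} (t : Fin n → Fin n → K)
    (x y : Fin n → K) : Fin n → K :=
  fun k => ∑ i, x i * y i * t i k

lemma evolMul_add_left {K : Type*} [Field K] {n : ℕ} (t : Fin n → Fin n → K)
    (a b v : Fin n → K) : evolMul t (a + b) v = evolMul t a v + evolMul t b v := by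
  funext k
  simp [evolMul, add_mul, Finset.sum_add_distrib]

lemma evolMul_add_right {K : Type*} [Field K] {n : ℕ} (t : Fin n → Fin n → K)
    (v a b : Fin n → K) : evolMul t v (a + b) = evolMul t v a + evolMul t v b := by
  funext k
  simp [evolMul, mul_add, add_mul, Finset.sum_add_distrib]

lemma evolMul_smul_left {K : Type*} [Field K] {n : ℕ} (t : Fin n → Fin n → K)
    (c : K) (a v : Fin n → K) : evolMul t (c • a) v = c • evolMul t a v := by
  funext k
  simp [evolMul, Finset.mul_sum, mul_assoc]

lemma evolMul_smul_right {K : Type*} [Field K] {n : ℕ} (t : Fin n → Fin n → K)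
    (c : K) (v a : Fin n → K) : evolMul t v (c • a) = c • evolMul t v a := by
  funext k
  simp [evolMul, Finset.mul_sum]
  ring_nf
  apply Finset.sum_congr rfl
  intro i _
  ring

/-- The annihilator of the evolution algebra with structure constants `t`. -/
def evolAnn {K : Type*} [Field K] {n : ℕ} (t : Fin n → Fin n → K) :
    Submodule K (Fin n → K) where
  carrier := {u | ∀ v, evolMul t u v = 0 ∧ evolMul t v u = 0}
  zero_mem' := by
    intro v
    constructor <;> · funext k; simp [evolMul]
  add_mem' := by
    intro a b ha hb v
    exact ⟨by rw [evolMul_add_left, (ha v).1, (hb v).1, add_zero],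
           by rw [evolMul_add_right, (ha v).2, (hb v).2, add_zero]⟩
  smul_mem' := by
    intro c a ha v
    exact ⟨by rw [evolMul_smul_left, (ha v).1, smul_zero],
           by rw [evolMul_smul_right, (ha v).2, smul_zero]⟩

/-- The derived algebra (span of all products). -/
def evolDerived {K : Type*} [Field K] {n : ℕ} (t : Fin n → Fin n → K) :
    Submodule K (Fin n → K) :=
  Submodule.span K {w | ∃ u v, evolMul t u v = w}

/-- Two evolution algebras (given by structure constants) are isomorphic. -/
def EvolIsom {K : Type*} [Field K] {n : ℕ} (t t' : Fin n → Fin n → K) : Prop :=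
  ∃ f : (Fin n → K) ≃ₗ[K] (Fin n → K),
    ∀ u v, evolMul t' (f u) (f v) = f (evolMul t u v)

/-- Two evolution algebras (given by structure constants) are isotopic. -/
def EvolIsotopic {K : Type*} [Field K] {n : ℕ} (t t' : Fin n → Fin n → K) : Prop :=
  ∃ f g h : (Fin n → K) ≃ₗ[K] (Fin n → K),
    ∀ u v, evolMul t' (f u) (g v) = h (evolMul t u v)

/-- Two evolution algebras (given by structure constants) are strongly isotopic. -/
def EvolStrongIsotopic {K : Type*} [Field K] {n : ℕ} (t t' : Fin n → Fin n → K) : Prop :=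
  ∃ f h : (Fin n → K) ≃ₗ[K] (Fin n → K),
    ∀ u v, evolMul t' (f u) (f v) = h (evolMul t u v)

/-
STATEMENT 2: If there exist permutations α, β of {1,…,n} with t'_{α(i)β(j)} = t_{ij}
for all i, j, then the evolution algebras A_T and A_{T'} are strongly isotopic.
-/
theorem strongIsotopic_of_perm_structure_constants
    {K : Type*} [Field K] {n : ℕ} (t t' : Fin n → Fin n → K)
    (α β : Equiv.Perm (Fin n)) (hperm : ∀ i j, t' (α i) (β j) = t i j) :
    EvolStrongIsotopic t t' := by
  refine ⟨LinearEquiv.funCongrLeft K K α.symm,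
          LinearEquiv.funCongrLeft K K β.symm, ?_⟩
  intro u v
  funext k
  simp only [LinearEquiv.funCongrLeft_apply, LinearMap.funLeft_apply, evolMul]
  rw [← Equiv.sum_comp α (fun i => u (α.symm i) * v (α.symm i) * t' i k)]
  simp only [Equiv.symm_apply_apply]
  refine Finset.sum_congr rfl fun i _ => ?_
  rw [← hperm i (β.symm k)]
  simp
end
end

section
/- Let A_T be an n-dimensional evolution algebra over a field K with structure constants t_{ij}. Then there exists an n-dimensional evolution algebra A_{T'} over K, with structure constants t'_{ij}, that is strongly isotopic to A_T and satisfies: (a) if t'_{ii} = 0 for some i, then t'_{jk} = 0 for all j, k ≥ i; and (b) if t'_{ii} ≠ 0 for some i, then t'_{ij} = 0 for all j ≠ i. -/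
open scoped BigOperators

noncomputable section

/-! Writing `u = ∑ uᵢ eᵢ`, the product is `u * v = ∑ᵢ uᵢ vᵢ tᵢ` with `tᵢ` the `i`-th row of
structure constants. Hence for a permutation `π` of the natural basis and any linear
automorphism `h`, the pair `(u ↦ u ∘ π, h)` is a strong isotopy onto the evolution algebra with
rows `h (t_{π i})`. Choose `π` so that the rows `t_{π 0}, …, t_{π (r-1)}` form a basis of the span
of all rows, and `h` sending them to `e₀, …, e_{r-1}`: then the first `r` new rows are standard
basis vectors and every new row vanishes beyond coordinate `r`, which is the normal form. -/

open Module

lemma evolMul_eq_sum_smul {K : Type*} [Field K] {n : ℕ} (t : Fin n → Fin n → K)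
    (u v : Fin n → K) : evolMul t u v = ∑ i, (u i * v i) • t i := by
  funext k
  simp [evolMul, Finset.sum_apply]

lemma evolStrongIsotopic_perm_linearEquiv {K : Type*} [Field K] {n : ℕ}
    (t : Fin n → Fin n → K) (π : Equiv.Perm (Fin n)) (h : (Fin n → K) ≃ₗ[K] (Fin n → K)) :
    EvolStrongIsotopic t (fun j => h (t (π j))) := by
  refine ⟨LinearEquiv.funCongrLeft K K π, h, fun u v => ?_⟩
  rw [evolMul_eq_sum_smul, evolMul_eq_sum_smul, map_sum]
  simp only [map_smul]
  exact Fintype.sum_equiv π _ _ fun j => rfl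

lemma Module.Basis.sumExtend_inl {K V ι : Type*} [DivisionRing K] [AddCommGroup V] [Module K V]
    {v : ι → V} (hv : LinearIndependent K v) (i : ι) :
    Basis.sumExtend hv (Sum.inl i) = v i := by
  unfold Basis.sumExtend
  rw [Basis.reindex_apply, Basis.extend_apply_self]
  erw [Equiv.symm_symm, Equiv.trans_apply, Equiv.sumCongr_apply, Sum.map_inl,
    Equiv.Set.sumDiffSubset_apply_inl]
  rfl

lemma LinearIndependent.exists_basis_extending_subtype {K V ι : Type*} [DivisionRing K]
    [AddCommGroup V] [Module K V] [FiniteDimensional K V] [Finite ι] (p : ι → Prop)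
    [DecidablePred p] {v : {i // p i} → V} (hv : LinearIndependent K v)
    (hrank : finrank K V = Nat.card ι) :
    ∃ b : Basis ι K V, ∀ i (hi : p i), b i = v ⟨i, hi⟩ := by
  let B := Basis.sumExtend hv
  have : Finite ({i // p i} ⊕ Basis.sumExtendIndex hv) := Module.Finite.finite_basis B
  have : Finite (Basis.sumExtendIndex hv) := .of_injective _ (@Sum.inr_injective {i // p i} _)
  have hcard : Nat.card (Basis.sumExtendIndex hv) = Nat.card {i // ¬p i} := by
    have hB := finrank_eq_nat_card_basis B
    have hι := Nat.card_congr (Equiv.sumCompl p)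
    rw [Nat.card_sum] at hB hι
    omega
  obtain ⟨e⟩ := Finite.card_eq.mp hcard
  refine ⟨B.reindex ((Equiv.sumCongr (Equiv.refl _) e).trans (Equiv.sumCompl p)), fun i hi => ?_⟩
  simp [B, Equiv.sumCompl_symm_apply_of_pos hi, Basis.sumExtend_inl]

lemma exists_perm_linearEquiv_rows_eq_single {K V : Type*} [Field K] [AddCommGroup V]
    [Module K V] [FiniteDimensional K V] {n : ℕ} (hV : finrank K V = n) (t : Fin n → V) :
    ∃ (r : ℕ) (π : Equiv.Perm (Fin n)) (h : V ≃ₗ[K] (Fin n → K)),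
      (∀ j : Fin n, (j : ℕ) < r → h (t (π j)) = Pi.single j 1) ∧
      ∀ i k : Fin n, r ≤ (k : ℕ) → h (t i) k = 0 := by
  classical
  obtain ⟨s, -, -, hspan, hind⟩ :=
    exists_linearIndepOn_extension (linearIndepOn_empty K t) (Set.empty_subset Set.univ)
  set r := Nat.card s
  have hr : r ≤ n := (Finite.card_subtype_le _).trans_eq (Nat.card_fin n)
  let e : {j : Fin n // (j : ℕ) < r} ≃ s := (Fin.castLEquiv hr).symm.trans (Finite.equivFin s).symm
  obtain ⟨b, hb⟩ := (hind.comp e e.injective).exists_basis_extending_subtype _ (by simp [hV])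
  have hbπ (j : Fin n) (hj : (j : ℕ) < r) : t (e.extendSubtype j) = b j := by
    rw [hb j hj, e.extendSubtype_apply_of_mem j hj]
    rfl
  have hts : t '' s ⊆ b '' {j | (j : ℕ) < r} := by
    rintro _ ⟨x, hx, rfl⟩
    obtain ⟨j, hj⟩ := e.surjective ⟨x, hx⟩
    exact ⟨j, j.2, by simp [hb j j.2, hj]⟩
  refine ⟨r, e.extendSubtype, b.equivFun, fun j hj => ?_, fun i k hk => ?_⟩
  · ext k
    simp [hbπ j hj, Basis.equivFun_self, Pi.single_apply, eq_comm]
  · have hti : t i ∈ Submodule.span K (b '' {j | (j : ℕ) < r}) :=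
      Submodule.span_mono hts (hspan ⟨i, trivial, rfl⟩)
    rw [b.mem_span_image] at hti
    simpa using mt (@hti k) (not_lt.mpr hk)

lemma normal_form_of_rows_eq_single {K : Type*} [Field K] {n : ℕ} (t' : Fin n → Fin n → K)
    (r : ℕ) (hsingle : ∀ j : Fin n, (j : ℕ) < r → t' j = Pi.single j 1)
    (hzero : ∀ j k : Fin n, r ≤ (k : ℕ) → t' j k = 0) :
    (∀ i : Fin n, t' i i = 0 → ∀ j k : Fin n, i ≤ j → i ≤ k → t' j k = 0) ∧
      (∀ i : Fin n, t' i i ≠ 0 → ∀ j : Fin n, j ≠ i → t' i j = 0) := by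
  have hdiag (i : Fin n) (hi : (i : ℕ) < r) : t' i i ≠ 0 := by simp [hsingle i hi]
  refine ⟨fun i hii j k _ hik => hzero j k ?_, fun i hii j hji => ?_⟩
  · exact (not_lt.mp fun hi => hdiag i hi hii).trans hik
  · have hi : (i : ℕ) < r := not_le.mp fun hi => hii (hzero i i hi)
    simp [hsingle i hi, hji]

theorem exists_strongIsotopic_normal_form
    {K : Type*} [Field K] {n : ℕ} (t : Fin n → Fin n → K) :
    ∃ t' : Fin n → Fin n → K,
      EvolStrongIsotopic t t' ∧
      (∀ i : Fin n, t' i i = 0 → ∀ j k : Fin n, i ≤ j → i ≤ k → t' j k = 0) ∧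
      (∀ i : Fin n, t' i i ≠ 0 → ∀ j : Fin n, j ≠ i → t' i j = 0) := by
  obtain ⟨r, π, h, hsingle, hzero⟩ :=
    exists_perm_linearEquiv_rows_eq_single (finrank_fin_fun K) t
  exact ⟨fun j => h (t (π j)), evolStrongIsotopic_perm_linearEquiv t π h,
    normal_form_of_rows_eq_single _ r hsingle fun j k => hzero (π j) k⟩
end
end

section
/- Let m and m' be two distinct non-negative integers, each at most n. Then no n-dimensional evolution algebra over a field K whose annihilator has dimension n − m is isotopic to an n-dimensional evolution algebra over K whose annihilator has dimension n − m'. -/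
open scoped BigOperators

noncomputable section

/-
STATEMENT 5: Let m ≠ m' be non-negative integers, each at most n.  Then no
n-dimensional evolution algebra whose annihilator has dimension n − m is isotopic to
an n-dimensional evolution algebra whose annihilator has dimension n − m'.
-/
lemma evolMul_comm' {K : Type*} [Field K] {n : ℕ} (t : Fin n → Fin n → K)
    (u v : Fin n → K) : evolMul t u v = evolMul t v u := by
  funext k
  unfold evolMul
  exact Finset.sum_congr rfl fun i _ => by ring

lemma mem_evolAnn_iff {K : Type*} [Field K] {n : ℕ} (t : Fin n → Fin n → K)
    (u : Fin n → K) : u ∈ evolAnn t ↔ ∀ v, evolMul t u v = 0 := by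
  constructor
  · intro h v; exact (h v).1
  · intro h v; exact ⟨h v, by rw [evolMul_comm']; exact h v⟩

lemma isotopic_map_ann {K : Type*} [Field K] {n : ℕ} (t t' : Fin n → Fin n → K)
    (f g h : (Fin n → K) ≃ₗ[K] (Fin n → K))
    (H : ∀ u v, evolMul t' (f u) (g v) = h (evolMul t u v)) :
    Submodule.map (f : (Fin n → K) →ₗ[K] (Fin n → K)) (evolAnn t) = evolAnn t' := by
  ext x
  rw [Submodule.mem_map_equiv, mem_evolAnn_iff, mem_evolAnn_iff]
  constructor
  · intro hx w
    have := H (f.symm x) (g.symm w)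
    rw [f.apply_symm_apply, g.apply_symm_apply, hx (g.symm w), map_zero] at this
    exact this
  · intro hx v
    have := H (f.symm x) v
    rw [f.apply_symm_apply, hx (g v)] at this
    have := congrArg h.symm this
    rw [h.symm_apply_apply, map_zero] at this
    exact this.symm

theorem not_isotopic_of_ne_annihilator_dim
    {K : Type*} [Field K] {n m m' : ℕ} (hm : m ≤ n) (hm' : m' ≤ n) (hne : m ≠ m')
    (t t' : Fin n → Fin n → K)
    (hann : Module.finrank K (evolAnn t) = n - m)
    (hann' : Module.finrank K (evolAnn t') = n - m') :
    ¬ EvolIsotopic t t' := by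
  rintro ⟨f, g, h, H⟩
  have hmap := isotopic_map_ann t t' f g h H
  have heq : Module.finrank K (evolAnn t') = Module.finrank K (evolAnn t) := by
    rw [← hmap, LinearEquiv.finrank_map_eq]
  rw [hann, hann'] at heq
  omega
end
end

section
/- Every two-dimensional evolution algebra over a field K with trivial (zero-dimensional) annihilator is isomorphic to a two-dimensional evolution algebra over K with natural basis {e_1, e_2} such that e_1e_1 ∈ {e_1, e_2, e_1 + e_2}. -/
open scoped BigOperators

noncomputable section

/-!
Rescaling the natural basis to `dᵢ eᵢ` replaces the first row `(a, b)` of structure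
constants by `(a / d₀, d₁ b / d₀²)`. A trivial annihilator forces `(a, b) ≠ 0`, and then
`d = (a, 1)`, `(1, 1 / b)` or `(a, a² / b)` normalises it to `(1, 0)`, `(0, 1)` or `(1, 1)`
according as `b = 0`, `a = 0` or neither.
-/

lemma evolMul_single_self {K : Type*} [Field K] {n : ℕ} (t : Fin n → Fin n → K)
    (i : Fin n) : evolMul t (Pi.single i 1) (Pi.single i 1) = t i := by
  funext k
  simp [evolMul, Pi.single_apply]

lemma single_mem_evolAnn_iff {K : Type*} [Field K] {n : ℕ} (t : Fin n → Fin n → K)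
    (i : Fin n) : Pi.single i 1 ∈ evolAnn t ↔ t i = 0 := by
  refine ⟨fun h => evolMul_single_self t i ▸ (h _).1, fun h v => ?_⟩
  constructor <;> funext k <;> simp [evolMul, Pi.single_apply, congrFun h k]

lemma ne_zero_of_evolAnn_eq_bot {K : Type*} [Field K] {n : ℕ} {t : Fin n → Fin n → K}
    (hann : evolAnn t = ⊥) (i : Fin n) : t i ≠ 0 := by
  rw [Ne, ← single_mem_evolAnn_iff, hann, Submodule.mem_bot]
  exact Pi.single_ne_zero_iff.mpr one_ne_zero

lemma evolIsom_rescale {K : Type*} [Field K] {n : ℕ} (t : Fin n → Fin n → K)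
    {d : Fin n → K} (hd : ∀ i, d i ≠ 0) :
    EvolIsom t (fun i k => d k * t i k / d i ^ 2) := by
  refine ⟨LinearEquiv.piCongrRight fun i => LinearEquiv.smulOfNeZero K K (d i) (hd i),
    fun u v => funext fun k => ?_⟩
  simp only [evolMul, LinearEquiv.piCongrRight_apply, LinearEquiv.smulOfNeZero_apply,
    smul_eq_mul, Finset.mul_sum]
  refine Finset.sum_congr rfl fun i _ => ?_
  have := hd i
  field_simp

lemma exists_rescale_mem_basisLike {K : Type*} [Field K] {r : Fin 2 → K} (hr : r ≠ 0) :
    ∃ d : Fin 2 → K, (∀ i, d i ≠ 0) ∧ (fun k => d k * r k / d 0 ^ 2) ∈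
      ({Pi.single 0 1, Pi.single 1 1, Pi.single 0 1 + Pi.single 1 1} :
        Set (Fin 2 → K)) := by
  by_cases hb : r 1 = 0
  · have ha : r 0 ≠ 0 := fun ha => hr (funext fun k => by fin_cases k <;> simp [ha, hb])
    refine ⟨![r 0, 1], fun i => by fin_cases i <;> simp [ha], Or.inl ?_⟩
    funext k
    fin_cases k <;> simp [ha, hb, sq]
  by_cases ha : r 0 = 0
  · refine ⟨![1, 1 / r 1], fun i => by fin_cases i <;> simp [hb], Or.inr (Or.inl ?_)⟩
    funext k
    fin_cases k <;> simp [ha, hb]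
  · refine ⟨![r 0, r 0 ^ 2 / r 1], fun i => by fin_cases i <;> simp [ha, hb],
      Or.inr (Or.inr ?_)⟩
    funext k
    fin_cases k <;> simp <;> field_simp

theorem isom_with_first_square_basisLike
    {K : Type*} [Field K] (t : Fin 2 → Fin 2 → K) (hann : evolAnn t = ⊥) :
    ∃ t' : Fin 2 → Fin 2 → K,
      EvolIsom t t' ∧
      evolMul t' (Pi.single 0 1) (Pi.single 0 1) ∈
        ({Pi.single 0 1, Pi.single 1 1, Pi.single 0 1 + Pi.single 1 1} :
          Set (Fin 2 → K)) := by
  obtain ⟨d, hd, hmem⟩ := exists_rescale_mem_basisLike (ne_zero_of_evolAnn_eq_bot hann 0)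
  exact ⟨_, evolIsom_rescale t hd, by rwa [evolMul_single_self]⟩
end
end

section
/- Over any field K, every two-dimensional evolution algebra is isotopic to exactly one of the following four algebras: the abelian algebra (all products zero); E_1 with e_1e_1 = e_1 and all other natural-basis products zero; E_2 with e_1e_1 = e_2e_2 = e_1 and all other natural-basis products zero; and E_{5_{0,0}} with e_1e_1 = e_1, e_2e_2 = e_2 and all other natural-basis products zero. In particular, these four algebras are pairwise non-isotopic, so there are exactly four isotopism classes of two-dimensional evolution algebras over K. -/
open scoped BigOperators

noncomputable section

/-- The four representatives of the isotopism classes of two-dimensional evolution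
algebras: the abelian algebra, E₁ (e₁e₁ = e₁), E₂ (e₁e₁ = e₂e₂ = e₁) and
E₅₀₀ (e₁e₁ = e₁, e₂e₂ = e₂), given by their structure constants. -/
def evolReps4 (K : Type*) [Field K] : Fin 4 → Fin 2 → Fin 2 → K :=
  ![![![0, 0], ![0, 0]],
    ![![1, 0], ![0, 0]],
    ![![1, 0], ![1, 0]],
    ![![1, 0], ![0, 1]]]

section Aux
variable {K : Type*} [Field K]

def mkE (M : Matrix (Fin 2) (Fin 2) K) (hd : M.det ≠ 0) : (Fin 2 → K) ≃ₗ[K] (Fin 2 → K) :=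
  M.toLinearEquiv' (M.invertibleOfIsUnitDet hd.isUnit)

lemma mkE_apply (M : Matrix (Fin 2) (Fin 2) K) (hd : M.det ≠ 0) (u : Fin 2 → K) (k : Fin 2) :
    mkE M hd u k = M k 0 * u 0 + M k 1 * u 1 := by
  show Matrix.toLin' M u k = _
  simp [Matrix.toLin'_apply, Matrix.mulVec, dotProduct, Fin.sum_univ_two]

lemma mulE (t : Fin 2 → Fin 2 → K) (u v : Fin 2 → K) (k : Fin 2) :
    evolMul t u v k = u 0 * v 0 * t 0 k + u 1 * v 1 * t 1 k := by
  simp [evolMul, Fin.sum_univ_two]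

lemma exists_h2 (a b : Fin 2 → K) (hd : a 0 * b 1 - a 1 * b 0 ≠ 0) :
    ∃ h : (Fin 2 → K) ≃ₗ[K] (Fin 2 → K), h a = ![1, 0] ∧ h b = ![0, 1] := by
  have hdet : (Matrix.of ![![a 0, b 0], ![a 1, b 1]]).det ≠ 0 := by
    rw [Matrix.det_fin_two_of]
    convert hd using 2
    ring
  refine ⟨(mkE _ hdet).symm, ?_, ?_⟩
  · have : mkE _ hdet ![1, 0] = a := by
      funext k
      rw [mkE_apply]
      fin_cases k <;> simp
    rw [LinearEquiv.symm_apply_eq]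
    exact this.symm
  · have : mkE _ hdet ![0, 1] = b := by
      funext k
      rw [mkE_apply]
      fin_cases k <;> simp
    rw [LinearEquiv.symm_apply_eq]
    exact this.symm

lemma exists_h1 (a : Fin 2 → K) (ha : a ≠ 0) :
    ∃ h : (Fin 2 → K) ≃ₗ[K] (Fin 2 → K), h a = ![1, 0] := by
  by_cases h0 : a 0 = 0
  · have h1 : a 1 ≠ 0 := by
      intro h1
      apply ha
      funext k
      fin_cases k <;> simp [h0, h1]
    obtain ⟨h, hh, -⟩ := exists_h2 a ![1, 0] (by simp [h0, h1])
    exact ⟨h, hh⟩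
  · obtain ⟨h, hh, -⟩ := exists_h2 a ![0, 1] (by simp [h0])
    exact ⟨h, hh⟩

def eP1 {n : ℕ} (t : Fin n → Fin n → K) : Prop := ∀ u v, evolMul t u v = 0
def eP2 {n : ℕ} (t : Fin n → Fin n → K) : Prop := ∃ u, u ≠ 0 ∧ ∀ v, evolMul t u v = 0
def eP3 {n : ℕ} (t : Fin n → Fin n → K) : Prop :=
  ∃ w : Fin n → K, ∀ u v, ∃ c : K, evolMul t u v = c • w

lemma isotopic_symm {n : ℕ} {t t' : Fin n → Fin n → K} (h : EvolIsotopic t t') :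
    EvolIsotopic t' t := by
  obtain ⟨f, g, h, H⟩ := h
  refine ⟨f.symm, g.symm, h.symm, fun u v => ?_⟩
  have := H (f.symm u) (g.symm v)
  rw [f.apply_symm_apply, g.apply_symm_apply] at this
  rw [this, h.symm_apply_apply]

lemma isotopic_trans {n : ℕ} {t t' t'' : Fin n → Fin n → K}
    (h1 : EvolIsotopic t t') (h2 : EvolIsotopic t' t'') : EvolIsotopic t t'' := by
  obtain ⟨f, g, h, H⟩ := h1
  obtain ⟨f', g', h', H'⟩ := h2
  refine ⟨f.trans f', g.trans g', h.trans h', fun u v => ?_⟩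
  simp only [LinearEquiv.trans_apply]
  rw [H' (f u) (g v), H u v]

lemma eP1_iso {n : ℕ} {t t' : Fin n → Fin n → K} (hi : EvolIsotopic t t') (hP : eP1 t) :
    eP1 t' := by
  obtain ⟨f, g, h, H⟩ := hi
  intro u v
  have := H (f.symm u) (g.symm v)
  rw [f.apply_symm_apply, g.apply_symm_apply, hP] at this
  rw [this, map_zero]

lemma eP2_iso {n : ℕ} {t t' : Fin n → Fin n → K} (hi : EvolIsotopic t t') (hP : eP2 t) :
    eP2 t' := by
  obtain ⟨f, g, h, H⟩ := hi
  obtain ⟨u, hu, hann⟩ := hP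
  refine ⟨f u, by simp [hu], fun v => ?_⟩
  have := H u (g.symm v)
  rw [g.apply_symm_apply, hann, map_zero] at this
  exact this

lemma eP3_iso {n : ℕ} {t t' : Fin n → Fin n → K} (hi : EvolIsotopic t t') (hP : eP3 t) :
    eP3 t' := by
  obtain ⟨f, g, h, H⟩ := hi
  obtain ⟨w, hw⟩ := hP
  refine ⟨h w, fun u v => ?_⟩
  obtain ⟨c, hc⟩ := hw (f.symm u) (g.symm v)
  refine ⟨c, ?_⟩
  have := H (f.symm u) (g.symm v)
  rw [f.apply_symm_apply, g.apply_symm_apply, hc, map_smul] at this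
  exact this

@[simp] lemma rep00 : evolReps4 K 0 0 = ![0, 0] := rfl
@[simp] lemma rep01 : evolReps4 K 0 1 = ![0, 0] := rfl
@[simp] lemma rep10 : evolReps4 K 1 0 = ![1, 0] := rfl
@[simp] lemma rep11 : evolReps4 K 1 1 = ![0, 0] := rfl
@[simp] lemma rep20 : evolReps4 K 2 0 = ![1, 0] := rfl
@[simp] lemma rep21 : evolReps4 K 2 1 = ![1, 0] := rfl
@[simp] lemma rep30 : evolReps4 K 3 0 = ![1, 0] := rfl
@[simp] lemma rep31 : evolReps4 K 3 1 = ![0, 1] := rfl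

lemma hP1_0 : eP1 (evolReps4 K 0) := by
  intro u v
  funext k
  rw [mulE]
  fin_cases k <;> simp

lemma hnP1_1 : ¬ eP1 (evolReps4 K 1) := by
  intro h
  have := congrFun (h ![1, 0] ![1, 0]) 0
  rw [mulE] at this
  simp at this

lemma hnP1_2 : ¬ eP1 (evolReps4 K 2) := by
  intro h
  have := congrFun (h ![1, 0] ![1, 0]) 0
  rw [mulE] at this
  simp at this

lemma hnP1_3 : ¬ eP1 (evolReps4 K 3) := by
  intro h
  have := congrFun (h ![1, 0] ![1, 0]) 0
  rw [mulE] at this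
  simp at this

lemma hP2_1 : eP2 (evolReps4 K 1) := by
  refine ⟨![0, 1], ?_, fun v => ?_⟩
  · intro h
    have := congrFun h 1
    simp at this
  · funext k
    rw [mulE]
    fin_cases k <;> simp

lemma hnP2_2 : ¬ eP2 (evolReps4 K 2) := by
  rintro ⟨u, hu, hann⟩
  apply hu
  funext k
  have h0 := congrFun (hann ![1, 0]) 0
  have h1 := congrFun (hann ![0, 1]) 0
  rw [mulE] at h0 h1
  simp at h0 h1
  fin_cases k <;> simpa

lemma hnP2_3 : ¬ eP2 (evolReps4 K 3) := by
  rintro ⟨u, hu, hann⟩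
  apply hu
  funext k
  have h0 := congrFun (hann ![1, 0]) 0
  have h1 := congrFun (hann ![0, 1]) 1
  rw [mulE] at h0 h1
  simp at h0 h1
  fin_cases k <;> simpa

lemma hP3_2 : eP3 (evolReps4 K 2) := by
  refine ⟨![1, 0], fun u v => ⟨u 0 * v 0 + u 1 * v 1, ?_⟩⟩
  funext k
  rw [mulE]
  fin_cases k <;> simp <;> ring

lemma hnP3_3 : ¬ eP3 (evolReps4 K 3) := by
  rintro ⟨w, hw⟩
  obtain ⟨c, hc⟩ := hw ![1, 0] ![1, 0]
  obtain ⟨c', hc'⟩ := hw ![0, 1] ![0, 1]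
  have hc0 := congrFun hc 0
  have hc1 := congrFun hc 1
  have hc'1 := congrFun hc' 1
  rw [mulE] at hc0 hc1 hc'1
  simp at hc0 hc1 hc'1
  -- hc0 : 1 = c * w 0, hc1 : c = 0 ∨ w 1 = 0, hc'1 : 1 = c' * w 1
  rcases hc1 with h | h
  · rw [h, zero_mul] at hc0
    exact (one_ne_zero (α := K)) hc0
  · rw [h, mul_zero] at hc'1
    exact (one_ne_zero (α := K)) hc'1

lemma exists_lam (a b : Fin 2 → K) (ha : a ≠ 0) (hb : b ≠ 0)
    (hd : a 0 * b 1 - a 1 * b 0 = 0) : ∃ l : K, l ≠ 0 ∧ b = l • a := by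
  by_cases h0 : a 0 = 0
  · have h1 : a 1 ≠ 0 := by
      intro h1
      exact ha (by funext k; fin_cases k <;> simp [h0, h1])
    have hb0 : b 0 = 0 := by
      have : a 1 * b 0 = 0 := by linear_combination -hd + b 1 * h0
      rcases mul_eq_zero.mp this with h | h
      · exact absurd h h1
      · exact h
    have hb1 : b 1 ≠ 0 := by
      intro h1
      exact hb (by funext k; fin_cases k <;> simp [hb0, h1])
    refine ⟨b 1 / a 1, div_ne_zero hb1 h1, ?_⟩
    funext k
    fin_cases k <;> simp [Pi.smul_apply, smul_eq_mul, h0, hb0]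
    field_simp
  · have hb0 : b 0 ≠ 0 := by
      intro hb0
      have hb1 : b 1 = 0 := by
        have : a 0 * b 1 = 0 := by linear_combination hd + a 1 * hb0
        rcases mul_eq_zero.mp this with h | h
        · exact absurd h h0
        · exact h
      exact hb (by funext k; fin_cases k <;> simp [hb0, hb1])
    refine ⟨b 0 / a 0, div_ne_zero hb0 h0, ?_⟩
    funext k
    fin_cases k <;> simp [Pi.smul_apply, smul_eq_mul] <;> field_simp <;>
      first
        | linear_combination -hd
        | linear_combination hd
        | linear_combination 2 * hd
        | linear_combination -2 * hd

lemma exists_rep (t : Fin 2 → Fin 2 → K) : ∃ s : Fin 4, EvolIsotopic t (evolReps4 K s) := by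
  by_cases ha : t 0 = 0 <;> by_cases hb : t 1 = 0
  · -- abelian
    refine ⟨0, LinearEquiv.refl _ _, LinearEquiv.refl _ _, LinearEquiv.refl _ _, fun u v => ?_⟩
    simp only [LinearEquiv.refl_apply]
    funext k
    rw [mulE, mulE]
    fin_cases k <;> simp [ha, hb]
  · -- a = 0, b ≠ 0 : E1 via swap
    have hdsw : (Matrix.of ![![(0 : K), 1], ![1, 0]]).det ≠ 0 := by
      rw [Matrix.det_fin_two_of]; norm_num
    obtain ⟨h, hh⟩ := exists_h1 (t 1) hb
    refine ⟨1, mkE _ hdsw, mkE _ hdsw, h, fun u v => ?_⟩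
    have key : evolMul t u v = (u 1 * v 1) • t 1 := by
      funext k
      rw [mulE]
      simp [ha, mul_assoc]
    rw [key, map_smul, hh]
    funext k
    rw [mulE]
    simp only [mkE_apply, Matrix.of_apply]
    fin_cases k <;> simp <;> ring
  · -- a ≠ 0, b = 0 : E1
    obtain ⟨h, hh⟩ := exists_h1 (t 0) ha
    refine ⟨1, LinearEquiv.refl _ _, LinearEquiv.refl _ _, h, fun u v => ?_⟩
    have key : evolMul t u v = (u 0 * v 0) • t 0 := by
      funext k
      rw [mulE]
      simp [hb, mul_assoc]
    simp only [LinearEquiv.refl_apply]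
    rw [key, map_smul, hh]
    funext k
    rw [mulE]
    fin_cases k <;> simp
  · by_cases hdep : t 0 0 * t 1 1 - t 0 1 * t 1 0 = 0
    · -- dependent : E2
      obtain ⟨l, hl, hba⟩ := exists_lam (t 0) (t 1) ha hb hdep
      have hdg : (Matrix.of ![![(1 : K), 0], ![0, l]]).det ≠ 0 := by
        rw [Matrix.det_fin_two_of]; simpa using hl
      obtain ⟨h, hh⟩ := exists_h1 (t 0) ha
      refine ⟨2, LinearEquiv.refl _ _, mkE _ hdg, h, fun u v => ?_⟩
      have key : evolMul t u v = (u 0 * v 0 + l * (u 1 * v 1)) • t 0 := by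
        funext k
        rw [mulE]
        have hbk : t 1 k = l * t 0 k := congrFun hba k
        simp only [Pi.smul_apply, smul_eq_mul, hbk]
        ring
      simp only [LinearEquiv.refl_apply]
      rw [key, map_smul, hh]
      funext k
      rw [mulE]
      simp only [mkE_apply, Matrix.of_apply]
      fin_cases k <;> simp <;> ring
    · -- independent : E5
      obtain ⟨h, h0, h1⟩ := exists_h2 (t 0) (t 1) hdep
      refine ⟨3, LinearEquiv.refl _ _, LinearEquiv.refl _ _, h, fun u v => ?_⟩
      have key : evolMul t u v = (u 0 * v 0) • t 0 + (u 1 * v 1) • t 1 := by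
        funext k
        rw [mulE]
        simp [mul_assoc]
      simp only [LinearEquiv.refl_apply]
      rw [key, map_add, map_smul, map_smul, h0, h1]
      funext k
      rw [mulE]
      fin_cases k <;> simp

lemma noniso_lt : ∀ s s' : Fin 4, s < s' → ¬ EvolIsotopic (evolReps4 K s) (evolReps4 K s') := by
  intro s s' hlt hiso
  fin_cases s <;> fin_cases s' <;> simp_all only [Fin.mk_lt_mk, Fin.isValue]
  · exact absurd hlt (by norm_num)
  · exact hnP1_1 (eP1_iso hiso hP1_0)
  · exact hnP1_2 (eP1_iso hiso hP1_0)
  · exact hnP1_3 (eP1_iso hiso hP1_0)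
  · exact absurd hlt (by norm_num)
  · exact absurd hlt (by norm_num)
  · exact hnP2_2 (eP2_iso hiso hP2_1)
  · exact hnP2_3 (eP2_iso hiso hP2_1)
  · exact absurd hlt (by norm_num)
  · exact absurd hlt (by norm_num)
  · exact absurd hlt (by norm_num)
  · exact hnP3_3 (eP3_iso hiso hP3_2)
  · exact absurd hlt (by norm_num)
  · exact absurd hlt (by norm_num)
  · exact absurd hlt (by norm_num)
  · exact absurd hlt (by norm_num)

lemma noniso : ∀ s s' : Fin 4, s ≠ s' → ¬ EvolIsotopic (evolReps4 K s) (evolReps4 K s') := by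
  intro s s' hne hiso
  rcases lt_or_gt_of_ne hne with h | h
  · exact noniso_lt s s' h hiso
  · exact noniso_lt s' s h (isotopic_symm hiso)

end Aux

/-
STATEMENT 10: Over any field K, every two-dimensional evolution algebra is isotopic
to exactly one of the abelian algebra, E₁, E₂ and E₅₀₀; in particular these four
algebras are pairwise non-isotopic, so there are exactly four isotopism classes of
two-dimensional evolution algebras over K.
-/
theorem two_dim_evolution_four_isotopism_classes (K : Type*) [Field K] :
    (∀ t : Fin 2 → Fin 2 → K, ∃! s : Fin 4, EvolIsotopic t (evolReps4 K s)) ∧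
    (∀ s s' : Fin 4, s ≠ s' → ¬ EvolIsotopic (evolReps4 K s) (evolReps4 K s')) := by
  refine ⟨fun t => ?_, noniso⟩
  obtain ⟨s, hs⟩ := exists_rep t
  refine ⟨s, hs, fun s' hs' => ?_⟩
  by_contra hne
  exact noniso s' s hne (isotopic_trans (isotopic_symm hs') hs)
end
end

section
/- For every field K and all c, m ∈ K \ {0}, the two-dimensional evolution algebras A_{(e_1, c e_1)} and A_{(e_1, c m² e_1)} over K are isomorphic. -/
open scoped BigOperators

noncomputable section

/-- Structure constants of the two-dimensional evolution algebra
`A_{(a e₁ + b e₂, c e₁ + d e₂)}`, i.e. with natural basis `{e₁, e₂}` and products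
`e₁e₁ = a e₁ + b e₂`, `e₂e₂ = c e₁ + d e₂`, `e₁e₂ = e₂e₁ = 0`. -/
def evA {K : Type*} [Field K] (a b c d : K) : Fin 2 → Fin 2 → K :=
  ![![a, b], ![c, d]]

/-
STATEMENT 11: For every field K and all c, m ∈ K \ {0}, the two-dimensional evolution
algebras A_{(e₁, c e₁)} and A_{(e₁, c m² e₁)} over K are isomorphic.
-/
theorem isom_c_to_c_mul_sq {K : Type*} [Field K] (c m : K) (hc : c ≠ 0) (hm : m ≠ 0) :
    EvolIsom (evA (1 : K) 0 c 0) (evA (1 : K) 0 (c * m ^ 2) 0) := by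
  refine ⟨{ toFun := fun x => ![x 0, m⁻¹ * x 1]
            invFun := fun x => ![x 0, m * x 1]
            map_add' := ?_
            map_smul' := ?_
            left_inv := ?_
            right_inv := ?_ }, ?_⟩
  · intro a b
    funext k
    fin_cases k <;> simp [mul_add]
  · intro r a
    funext k
    fin_cases k <;> simp [smul_eq_mul] <;> ring
  · intro a
    funext k
    fin_cases k <;> simp [hm]
  · intro a
    funext k
    fin_cases k <;> simp [hm]
  · intro u v
    funext k
    fin_cases k <;>
      simp [evolMul, evA, Fin.sum_univ_two] <;> field_simp <;> ring
end
end

section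
/- For every field K and every c ∈ K \ {0, −1}, the two-dimensional evolution algebras A_{(e_1 + e_2, c(e_1 + e_2))} and A_{(e_1, c(c+1)² e_1)} over K are isomorphic. -/
open scoped BigOperators

noncomputable section

/-
STATEMENT 13: For every field K and every c ∈ K \ {0, −1}, the two-dimensional
evolution algebras A_{(e₁ + e₂, c(e₁ + e₂))} and A_{(e₁, c(c+1)² e₁)} over K are
isomorphic.
-/
theorem isom_diagonal_case {K : Type*} [Field K] (c : K) (hc : c ≠ 0) (hc' : c ≠ -1) :
    EvolIsom (evA (1 : K) 1 c c) (evA (1 : K) 0 (c * (c + 1) ^ 2) 0) := by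
  have h1 : c + 1 ≠ 0 := fun h => hc' (by linear_combination h)
  refine ⟨{ toFun := fun u => ![u 0 + c * u 1, (u 0 - u 1) / (c + 1)],
            map_add' := ?_, map_smul' := ?_,
            invFun := fun v => ![v 0 / (c + 1) + c * v 1, v 0 / (c + 1) - v 1],
            left_inv := ?_, right_inv := ?_ }, ?_⟩
  · intro a b
    funext k
    fin_cases k <;> simp <;> ring
  · intro m a
    funext k
    fin_cases k <;> simp <;> ring
  · intro u
    funext k
    fin_cases k <;> simp <;> field_simp <;> ring
  · intro v
    funext k
    fin_cases k <;> simp <;> field_simp <;> ring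
  · intro u v
    funext k
    fin_cases k <;>
      simp [evolMul, Fin.sum_univ_two, evA] <;> field_simp <;> ring
end
end

section
/- Let K be a field and let a, b, c, d, α, β, γ, δ ∈ K with ad ≠ bc and αδ ≠ βγ. Let f be an isomorphism from A_{(a e_1 + b e_2, c e_1 + d e_2)} to A_{(α e_1 + β e_2, γ e_1 + δ e_2)} with matrix (f_{ij}) relative to the natural bases, i.e. f(e_i) = f_{i1} e_1 + f_{i2} e_2 for i = 1, 2. Then either f_{11} = f_{22} = 0 or f_{12} = f_{21} = 0. -/
open scoped BigOperators

noncomputable section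

/-
STATEMENT 15: Let a, b, c, d, α, β, γ, δ ∈ K with ad ≠ bc and αδ ≠ βγ, and let f be an
isomorphism from A_{(a e₁ + b e₂, c e₁ + d e₂)} to A_{(α e₁ + β e₂, γ e₁ + δ e₂)} with
matrix (f_{ij}) relative to the natural bases.  Then f₁₁ = f₂₂ = 0 or f₁₂ = f₂₁ = 0.
(Here f_{ij} = f(eᵢ) j, where eᵢ = Pi.single i 1 with 0-based indices.)
-/
theorem isom_matrix_diag_or_antidiag
    {K : Type*} [Field K] (a b c d α β γ δ : K)
    (h1 : a * d ≠ b * c) (h2 : α * δ ≠ β * γ)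
    (f : (Fin 2 → K) ≃ₗ[K] (Fin 2 → K))
    (hf : ∀ u v, evolMul (evA α β γ δ) (f u) (f v) = f (evolMul (evA a b c d) u v)) :
    (f (Pi.single 0 1) 0 = 0 ∧ f (Pi.single 1 1) 1 = 0) ∨
    (f (Pi.single 0 1) 1 = 0 ∧ f (Pi.single 1 1) 0 = 0) := by
  set u : Fin 2 → K := f (Pi.single 0 1) with hu
  set v : Fin 2 → K := f (Pi.single 1 1) with hv
  have key := hf (Pi.single 0 1) (Pi.single 1 1)
  have hz : evolMul (evA a b c d) (Pi.single 0 1) (Pi.single 1 1) = 0 := by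
    funext k
    simp [evolMul, Fin.sum_univ_two, Pi.single_apply]
  rw [hz, map_zero] at key
  have h0 := congrFun key 0
  have h1' := congrFun key 1
  simp [evolMul, Fin.sum_univ_two, evA] at h0 h1'
  have hpr : u 0 * v 0 = 0 := by
    have h3 : u 0 * v 0 * (α * δ - β * γ) = 0 := by linear_combination h0 * δ - h1' * γ
    rcases mul_eq_zero.mp h3 with h | h
    · exact h
    · exact absurd (sub_eq_zero.mp h) h2
  have hqs : u 1 * v 1 = 0 := by
    have h3 : u 1 * v 1 * (α * δ - β * γ) = 0 := by linear_combination h1' * α - h0 * β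
    rcases mul_eq_zero.mp h3 with h | h
    · exact h
    · exact absurd (sub_eq_zero.mp h) h2
  have hune : u ≠ 0 := by
    intro h
    have : (Pi.single 0 1 : Fin 2 → K) = 0 := f.injective (by simp [← hu, h])
    have := congrFun this 0
    simp at this
  have hvne : v ≠ 0 := by
    intro h
    have : (Pi.single 1 1 : Fin 2 → K) = 0 := f.injective (by simp [← hv, h])
    have := congrFun this 1
    simp at this
  rcases mul_eq_zero.mp hpr with h | h
  · left
    refine ⟨h, ?_⟩
    have hu1 : u 1 ≠ 0 := by
      intro h1
      apply hune
      funext i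
      fin_cases i <;> simpa [h, h1]
    rcases mul_eq_zero.mp hqs with h' | h'
    · exact absurd h' hu1
    · exact h'
  · right
    have hv1 : v 1 ≠ 0 := by
      intro h1
      apply hvne
      funext i
      fin_cases i <;> simpa [h, h1]
    rcases mul_eq_zero.mp hqs with h' | h'
    · exact ⟨h', h⟩
    · exact absurd h' hv1
end
end

section
/- For every field K and all c, d ∈ K \ {0} with c ≠ d, the two-dimensional evolution algebras A_{(e_1 + e_2, c e_1 + d e_2)} and A_{(e_1 + e_2, (c/d²)((c/d) e_1 + e_2))} over K are isomorphic. -/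
open scoped BigOperators

noncomputable section

/-
STATEMENT 16: For every field K and all c, d ∈ K \ {0} with c ≠ d, the two-dimensional
evolution algebras A_{(e₁ + e₂, c e₁ + d e₂)} and A_{(e₁ + e₂, (c/d²)((c/d) e₁ + e₂))}
over K are isomorphic.
-/
theorem isom_case15 {K : Type*} [Field K] (c d : K) (hc : c ≠ 0) (hd : d ≠ 0)
    (hcd : c ≠ d) :
    EvolIsom (evA (1 : K) 1 c d) (evA (1 : K) 1 (c / d ^ 2 * (c / d)) (c / d ^ 2)) := by
  refine ⟨{ toFun := fun x => ![d * x 1, d ^ 2 / c * x 0]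
            invFun := fun y => ![c / d ^ 2 * y 1, (1 / d) * y 0]
            map_add' := by intro a b; funext k; fin_cases k <;> simp <;> ring
            map_smul' := by intro r a; funext k; fin_cases k <;> simp <;> ring
            left_inv := by
              intro x; funext k; fin_cases k <;> simp <;> field_simp <;> ring
            right_inv := by
              intro y; funext k; fin_cases k <;> simp <;> field_simp <;> ring }, ?_⟩
  intro u v
  funext k
  fin_cases k <;>
    simp [evolMul, Fin.sum_univ_two, evA] <;> field_simp <;> ring
end
end

section
/- For every field K and all c, d, γ, δ ∈ K such that d ≠ 0, δ ≠ 0 and cδ² = d²γ, the two-dimensional evolution algebras A_{(e_1, c e_1 + d e_2)} and A_{(e_1, γ e_1 + δ e_2)} over K are isomorphic. -/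
open scoped BigOperators

noncomputable section

/-! Rescaling `e₂` by `d / δ` fixes `e₁e₁ = e₁` and sends `e₂e₂ = c e₁ + d e₂` to
`(d / δ)² (γ e₁ + δ e₂)`, which is `c e₁ + (d / δ) d e₂` exactly when `c δ² = d² γ`. -/

def diagScaling {K : Type*} [Field K] {n : ℕ} (μ : Fin n → K) (hμ : ∀ i, μ i ≠ 0) :
    (Fin n → K) ≃ₗ[K] (Fin n → K) :=
  LinearEquiv.piCongrRight fun i => LinearEquiv.smulOfNeZero K K (μ i) (hμ i)

@[simp]
lemma diagScaling_apply {K : Type*} [Field K] {n : ℕ} (μ : Fin n → K) (hμ : ∀ i, μ i ≠ 0)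
    (x : Fin n → K) (i : Fin n) : diagScaling μ hμ x i = μ i * x i :=
  rfl

theorem evolIsom_of_diagScaling {K : Type*} [Field K] {n : ℕ} {t t' : Fin n → Fin n → K}
    (μ : Fin n → K) (hμ : ∀ i, μ i ≠ 0) (h : ∀ i k, μ i ^ 2 * t' i k = μ k * t i k) :
    EvolIsom t t' := by
  refine ⟨diagScaling μ hμ, fun u v => funext fun k => ?_⟩
  simp only [evolMul, diagScaling_apply, Finset.mul_sum]
  refine Finset.sum_congr rfl fun i _ => ?_
  linear_combination u i * v i * h i k

theorem isom_case21 {K : Type*} [Field K] (c d γ δ : K) (hd : d ≠ 0) (hδ : δ ≠ 0)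
    (hrel : c * δ ^ 2 = d ^ 2 * γ) :
    EvolIsom (evA (1 : K) 0 c d) (evA (1 : K) 0 γ δ) := by
  have hμ : ∀ i, ![1, d / δ] i ≠ 0 := Fin.forall_fin_two.2 ⟨one_ne_zero, div_ne_zero hd hδ⟩
  refine evolIsom_of_diagScaling ![1, d / δ] hμ fun i k => ?_
  fin_cases i <;> fin_cases k <;>
    simp only [evA, Fin.zero_eta, Fin.mk_one, Fin.isValue, Matrix.cons_val_zero, Matrix.cons_val_one,
      Matrix.cons_val', Matrix.cons_val_fin_one, one_pow, one_mul, mul_one, mul_zero]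
  · field_simp
    linear_combination -hrel
  · field_simp
end
end
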